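/- arXiv:2109.11419 — 6 statements merged into one kernel-verified Lean document; each statement's English description precedes it below -/
import Mathlib

section
/- Fix colors k,l ∈ {1,…,C}. Define μ^{l,0}_{k,0} := ν(σ₀) where σ₀ : {0,…,n_l−1} → {0,…,n_k−1} is the constant map 0, and for each i ∈ {0,…,n_l−1} and j ∈ {1,…,n_k−1} define μ^{l,i}_{k,j} := ν(σ_{i,j}) where σ_{i,j}(i) = j and σ_{i,j}(q) = 0 for q ≠ i. Then: (a) the family consisting of μ^{l,0}_{k,0} together with all μ^{l,i}_{k,j} (in total 1 + (n_k−1)·n_l matrices) is linearly independent in gl_N(ℝ); (b) for every σ : {0,…,n_l−1} → {0,…,n_k−1}, letting Q = { j ∈ {0,…,n_l−1} : σ(j) > 0 }, one has ν(σ) = Σ_{j∈Q} μ^{l,j}_{k,σ(j)} + (1 − |Q|)·μ^{l,0}_{k,0}. -/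
open Matrix BigOperators

/-- Index type for the standard basis of `ℝ^N`, `N = n 0 + ⋯ + n (C-1)`:
pairs `(c, i)` with `c` a color and `0 ≤ i ≤ n c - 1`. -/
abbrev Idx {C : ℕ} (n : Fin C → ℕ) := Σ c : Fin C, Fin (n c)

/-- A cocolor is a pair `(k, j)` with `1 ≤ j ≤ n k - 1`. -/
abbrev Cocolor {C : ℕ} (n : Fin C → ℕ) := {p : Idx n // (p.2 : ℕ) ≠ 0}

/-- `ν(σ) = Σ_j e_{(k, σ j)} (e^{(l, j)})ᵀ`. -/
noncomputable def nu {C : ℕ} (n : Fin C → ℕ) (k l : Fin C) (σ : Fin (n l) → Fin (n k)) :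
    Matrix (Idx n) (Idx n) ℝ :=
  ∑ j : Fin (n l), Matrix.single (⟨k, σ j⟩ : Idx n) (⟨l, j⟩ : Idx n) 1

/-- The network algebra `net_{C,N}`: the `ℝ`-span of all the `ν(σ)`. -/
noncomputable def net {C : ℕ} (n : Fin C → ℕ) : Submodule ℝ (Matrix (Idx n) (Idx n) ℝ) :=
  Submodule.span ℝ {M | ∃ (k l : Fin C) (σ : Fin (n l) → Fin (n k)), M = nu n k l σ}

/-- Vectors `x^k_0 = e_{(k,0)}` and `x^k_j = e_{(k,j)} - e_{(k,0)}` for `j ≠ 0`. -/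
noncomputable def xv {C : ℕ} (n : Fin C → ℕ) (hn : ∀ c, 0 < n c) (k : Fin C)
    (j : Fin (n k)) : Idx n → ℝ :=
  if (j : ℕ) = 0 then Pi.single (⟨k, j⟩ : Idx n) 1
  else Pi.single (⟨k, j⟩ : Idx n) 1 - Pi.single (⟨k, ⟨0, hn k⟩⟩ : Idx n) 1

/-- Covectors `X^k_0 = Σ_q e^{(k,q)}` and `X^k_i = e^{(k,i)}` for `i ≠ 0`. -/
noncomputable def Xv {C : ℕ} (n : Fin C → ℕ) (k : Fin C) (i : Fin (n k)) : Idx n → ℝ :=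
  if (i : ℕ) = 0 then ∑ q : Fin (n k), Pi.single (⟨k, q⟩ : Idx n) 1
  else Pi.single (⟨k, i⟩ : Idx n) 1

/-- `𝔠^k_l = x^k_0 (X^l_0)ᵀ`. -/
noncomputable def cM {C : ℕ} (n : Fin C → ℕ) (hn : ∀ c, 0 < n c) (k l : Fin C) :
    Matrix (Idx n) (Idx n) ℝ :=
  vecMulVec (xv n hn k ⟨0, hn k⟩) (Xv n l ⟨0, hn l⟩)

/-- `𝔞^β_l = x^β (X^l_0)ᵀ` for a cocolor `β` and color `l`. -/
noncomputable def aM {C : ℕ} (n : Fin C → ℕ) (hn : ∀ c, 0 < n c) (β : Cocolor n)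
    (l : Fin C) : Matrix (Idx n) (Idx n) ℝ :=
  vecMulVec (xv n hn β.1.1 β.1.2) (Xv n l ⟨0, hn l⟩)

/-- `𝔟^β_γ = x^β (X^γ)ᵀ` for cocolors `β, γ`. -/
noncomputable def bM {C : ℕ} (n : Fin C → ℕ) (hn : ∀ c, 0 < n c) (β γ : Cocolor n) :
    Matrix (Idx n) (Idx n) ℝ :=
  vecMulVec (xv n hn β.1.1 β.1.2) (Xv n γ.1.1 γ.1.2)

/-- `𝔬^k_γ = x^k_0 (X^γ)ᵀ` for a color `k` and cocolor `γ`. -/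
noncomputable def oM {C : ℕ} (n : Fin C → ℕ) (hn : ∀ c, 0 < n c) (k : Fin C)
    (γ : Cocolor n) : Matrix (Idx n) (Idx n) ℝ :=
  vecMulVec (xv n hn k ⟨0, hn k⟩) (Xv n γ.1.1 γ.1.2)


lemma nu_apply {C : ℕ} (n : Fin C → ℕ) (k l : Fin C) (σ : Fin (n l) → Fin (n k))
    (a : Idx n) (j : Fin (n l)) :
    nu n k l σ a ⟨l, j⟩ = if a = ⟨k, σ j⟩ then 1 else 0 := by
  rw [nu, Matrix.sum_apply, Finset.sum_eq_single j]
  · simp [Matrix.single, eq_comm]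
  · intro b _ hb
    simp only [Matrix.single, Matrix.of_apply, ite_eq_right_iff, and_imp]
    rintro - h
    exact (hb (by simpa using h)).elim
  · simp

lemma nu_apply_ne {C : ℕ} (n : Fin C → ℕ) (k l : Fin C) (σ : Fin (n l) → Fin (n k))
    (a b : Idx n) (hb : b.1 ≠ l) : nu n k l σ a b = 0 := by
  rw [nu, Matrix.sum_apply]
  apply Finset.sum_eq_zero
  intro j _
  simp only [Matrix.single, Matrix.of_apply, ite_eq_right_iff, and_imp]
  rintro - rfl
  exact (hb rfl).elim

lemma stmt1_parta {C : ℕ} (n : Fin C → ℕ) (hn : ∀ c, 0 < n c) (k l : Fin C) :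
    LinearIndependent ℝ (Sum.elim
      (fun _ : Unit => nu n k l fun _ => (⟨0, hn k⟩ : Fin (n k)))
      (fun p : Fin (n l) × {j : Fin (n k) // (j : ℕ) ≠ 0} =>
        nu n k l fun q => if q = p.1 then p.2.1 else (⟨0, hn k⟩ : Fin (n k)))) := by
  rw [Fintype.linearIndependent_iff]
  intro g hg
  have hr : ∀ p : Fin (n l) × {j : Fin (n k) // (j : ℕ) ≠ 0}, g (Sum.inr p) = 0 := by
    rintro ⟨i, j, hj⟩
    have h := congrFun (congrFun hg ⟨k, j⟩) ⟨l, i⟩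
    rw [Matrix.sum_apply, Fintype.sum_sum_type] at h
    simp only [Sum.elim_inl, Sum.elim_inr, Matrix.smul_apply, nu_apply, smul_eq_mul] at h
    have hj0 : j ≠ (⟨0, hn k⟩ : Fin (n k)) := by
      intro h'
      exact hj (by rw [h'])
    have hkey : ∀ p : Fin (n l) × {j' : Fin (n k) // (j' : ℕ) ≠ 0},
        g (Sum.inr p) * (if (⟨k, j⟩ : Idx n) =
            ⟨k, if i = p.1 then p.2.1 else ⟨0, hn k⟩⟩ then (1:ℝ) else 0)
        = if p = (i, ⟨j, hj⟩) then g (Sum.inr p) else 0 := by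
      rintro ⟨i', j', hj'⟩
      by_cases h1 : i = i'
      · subst h1
        rw [if_pos rfl]
        rcases eq_or_ne j j' with rfl | h2
        · simp
        · rw [if_neg (by simpa using fun h' : (⟨k,j⟩ : Idx n) = ⟨k,j'⟩ => h2 (by simpa using h')),
            mul_zero, if_neg]
          intro h'
          exact h2 ((congrArg (fun q => (q.2 : Fin (n k))) h')).symm
      · rw [if_neg h1, if_neg (by
          intro h'
          exact hj0 (by simpa using h')), mul_zero, if_neg]
        intro h'
        exact h1 (congrArg Prod.fst h').symm
    rw [Finset.sum_congr rfl (fun p _ => hkey p), Finset.sum_ite_eq' Finset.univ] at h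
    simpa [hj0] using h
  rintro (⟨⟩ | p)
  swap
  · exact hr p
  · have h := congrFun (congrFun hg ⟨k, ⟨0, hn k⟩⟩) ⟨l, ⟨0, hn l⟩⟩
    rw [Matrix.sum_apply, Fintype.sum_sum_type] at h
    simp only [Sum.elim_inl, Sum.elim_inr, Matrix.smul_apply, nu_apply, smul_eq_mul, hr,
      zero_mul, Finset.sum_const_zero, add_zero] at h
    simpa using h

lemma stmt1_partb {C : ℕ} (n : Fin C → ℕ) (hn : ∀ c, 0 < n c) (k l : Fin C)
    (σ : Fin (n l) → Fin (n k)) :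
      nu n k l σ =
        (∑ j ∈ Finset.univ.filter (fun j : Fin (n l) => (σ j : ℕ) ≠ 0),
          nu n k l fun q => if q = j then σ j else (⟨0, hn k⟩ : Fin (n k)))
        + ((1 : ℝ) -
            ((Finset.univ.filter (fun j : Fin (n l) => (σ j : ℕ) ≠ 0)).card : ℝ)) •
          nu n k l (fun _ => (⟨0, hn k⟩ : Fin (n k))) := by
  set Q := Finset.univ.filter (fun j : Fin (n l) => (σ j : ℕ) ≠ 0) with hQ
  ext a b
  obtain ⟨d, jb⟩ := b
  rcases eq_or_ne d l with rfl | hd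
  swap
  · have h0 : ∀ τ : Fin (n l) → Fin (n k), nu n k l τ a ⟨d, jb⟩ = 0 :=
      fun τ => nu_apply_ne n k l τ a ⟨d, jb⟩ hd
    simp [Matrix.add_apply, Matrix.sum_apply, Matrix.smul_apply, h0]
  rw [Matrix.add_apply, Matrix.sum_apply, Matrix.smul_apply, nu_apply, nu_apply]
  set z : ℝ := if a = ⟨k, (⟨0, hn k⟩ : Fin (n k))⟩ then 1 else 0 with hz
  have hterm : ∀ j ∈ Q, nu n k d (fun q => if q = j then σ j else ⟨0, hn k⟩) a ⟨d, jb⟩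
      = if jb = j then (if a = ⟨k, σ j⟩ then (1:ℝ) else 0) else z := by
    intro j _
    rw [nu_apply]
    by_cases h : jb = j <;> simp [h, hz]
  rw [Finset.sum_congr rfl hterm]
  by_cases hjb : jb ∈ Q
  · rw [← Finset.add_sum_erase _ _ hjb, if_pos rfl]
    have h2 : ∀ j ∈ Q.erase jb,
        (if jb = j then (if a = ⟨k, σ j⟩ then (1:ℝ) else 0) else z) = z := by
      intro j hj
      rw [if_neg (Ne.symm (Finset.ne_of_mem_erase hj))]
    rw [Finset.sum_congr rfl h2, Finset.sum_const, Finset.card_erase_of_mem hjb]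
    have h1 : 1 ≤ Q.card := Finset.card_pos.2 ⟨jb, hjb⟩
    rw [nsmul_eq_mul, smul_eq_mul, Nat.cast_sub h1]
    push_cast
    ring
  · have h2 : ∀ j ∈ Q,
        (if jb = j then (if a = ⟨k, σ j⟩ then (1:ℝ) else 0) else z) = z := by
      intro j hj
      rw [if_neg (by rintro rfl; exact hjb hj)]
    rw [Finset.sum_congr rfl h2, Finset.sum_const]
    have h0 : σ jb = ⟨0, hn k⟩ := by
      have : (σ jb : ℕ) = 0 := by simpa [hQ] using hjb
      exact Fin.ext this
    rw [h0, nsmul_eq_mul, smul_eq_mul, ← hz]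
    ring

/-- The family `μ^{l,0}_{k,0}, μ^{l,i}_{k,j}` is linearly independent, and every `ν(σ)`
is the combination `Σ_{j ∈ Q} μ^{l,j}_{k,σ j} + (1 - |Q|) μ^{l,0}_{k,0}` where
`Q = {j : σ j > 0}`. -/
theorem stmt1 {C : ℕ} (hC : 0 < C) (n : Fin C → ℕ) (hn : ∀ c, 0 < n c) (k l : Fin C) :
    LinearIndependent ℝ (Sum.elim
      (fun _ : Unit => nu n k l fun _ => (⟨0, hn k⟩ : Fin (n k)))
      (fun p : Fin (n l) × {j : Fin (n k) // (j : ℕ) ≠ 0} =>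
        nu n k l fun q => if q = p.1 then p.2.1 else (⟨0, hn k⟩ : Fin (n k)))) ∧
    ∀ σ : Fin (n l) → Fin (n k),
      nu n k l σ =
        (∑ j ∈ Finset.univ.filter (fun j : Fin (n l) => (σ j : ℕ) ≠ 0),
          nu n k l fun q => if q = j then σ j else (⟨0, hn k⟩ : Fin (n k)))
        + ((1 : ℝ) -
            ((Finset.univ.filter (fun j : Fin (n l) => (σ j : ℕ) ≠ 0)).card : ℝ)) •
          nu n k l (fun _ => (⟨0, hn k⟩ : Fin (n k))) := by
  exact ⟨stmt1_parta n hn k l, fun σ => stmt1_partb n hn k l σ⟩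
end

section
/- The dimension of net_{C,N} as a real vector space equals C² + B·C + B² = N² − B·C, where B = N − C. -/
open Matrix BigOperators

namespace NetAux

variable {C : ℕ} (n : Fin C → ℕ) (hn : ∀ c, 0 < n c)

/-- standard basis vector -/
noncomputable def ev (p : Idx n) : Idx n → ℝ := Pi.single p 1

lemma xv_zero (k : Fin C) (j : Fin (n k)) (hj : (j : ℕ) = 0) :
    xv n hn k j = ev n ⟨k, j⟩ := by simp [xv, ev, hj]

lemma xv_ne (k : Fin C) (j : Fin (n k)) (hj : (j : ℕ) ≠ 0) :
    xv n hn k j = ev n ⟨k, j⟩ - ev n ⟨k, ⟨0, hn k⟩⟩ := by simp [xv, ev, hj]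

lemma ev_eq_add (k : Fin C) (i : Fin (n k)) (hi : (i : ℕ) ≠ 0) :
    ev n (⟨k, i⟩ : Idx n) = xv n hn k i + xv n hn k ⟨0, hn k⟩ := by
  simp [xv, ev, hi]

lemma Xv_zero (l : Fin C) (i : Fin (n l)) (hi : (i : ℕ) = 0) :
    Xv n l i = ∑ q : Fin (n l), ev n ⟨l, q⟩ := by simp [Xv, ev, hi]

lemma Xv_ne (l : Fin C) (j : Fin (n l)) (hj : (j : ℕ) ≠ 0) :
    Xv n l j = ev n ⟨l, j⟩ := by simp [Xv, ev, hj]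

/- bilinearity of vecMulVec -/
lemma vmv_sum_right {ι : Type*} (s : Finset ι) (v : Idx n → ℝ) (w : ι → Idx n → ℝ) :
    vecMulVec v (∑ i ∈ s, w i) = ∑ i ∈ s, vecMulVec v (w i) := by
  ext a b
  simp [vecMulVec_apply, Finset.mul_sum, Matrix.sum_apply, Finset.sum_apply]

lemma vmv_sub_left (v v' w : Idx n → ℝ) :
    vecMulVec (v - v') w = vecMulVec v w - vecMulVec v' w := by
  ext a b; simp [vecMulVec_apply, sub_mul]

lemma vmv_add_left (v v' w : Idx n → ℝ) :
    vecMulVec (v + v') w = vecMulVec v w + vecMulVec v' w := by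
  ext a b; simp [vecMulVec_apply, add_mul]

lemma vmv_sub_right (v w w' : Idx n → ℝ) :
    vecMulVec v (w - w') = vecMulVec v w - vecMulVec v w' := by
  ext a b; simp [vecMulVec_apply, mul_sub]

lemma nu_eq (k l : Fin C) (σ : Fin (n l) → Fin (n k)) :
    nu n k l σ = ∑ j : Fin (n l), vecMulVec (ev n ⟨k, σ j⟩) (ev n ⟨l, j⟩) := by
  unfold nu
  refine Finset.sum_congr rfl fun j _ => ?_
  exact single_eq_single_vecMulVec_single _ _

/-- the good index type -/
abbrev GI := (Fin C × Fin C) ⊕ (Cocolor n × Fin C) ⊕ (Cocolor n × Cocolor n)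

noncomputable def F : GI n → Matrix (Idx n) (Idx n) ℝ
  | .inl (k, l) => cM n hn k l
  | .inr (.inl (β, l)) => aM n hn β l
  | .inr (.inr (β, γ)) => bM n hn β γ

lemma cM_eq_nu (k l : Fin C) : cM n hn k l = nu n k l (fun _ => ⟨0, hn k⟩) := by
  rw [nu_eq, cM, xv_zero n hn k ⟨0, hn k⟩ rfl, Xv_zero n l ⟨0, hn l⟩ rfl, vmv_sum_right]

lemma aM_eq (β : Cocolor n) (l : Fin C) :
    aM n hn β l = nu n β.1.1 l (fun _ => β.1.2) - nu n β.1.1 l (fun _ => ⟨0, hn β.1.1⟩) := by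
  obtain ⟨⟨k, i⟩, hi⟩ := β
  rw [nu_eq, nu_eq, ← Finset.sum_sub_distrib]
  rw [aM, Xv_zero n l ⟨0, hn l⟩ rfl, vmv_sum_right]
  refine Finset.sum_congr rfl fun j _ => ?_
  simp only
  rw [xv_ne n hn k i hi, vmv_sub_left]

lemma bM_eq (β γ : Cocolor n) :
    bM n hn β γ = nu n β.1.1 γ.1.1 (fun j' => if j' = γ.1.2 then β.1.2 else ⟨0, hn β.1.1⟩)
      - nu n β.1.1 γ.1.1 (fun _ => ⟨0, hn β.1.1⟩) := by
  obtain ⟨⟨k, i⟩, hi⟩ := β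
  obtain ⟨⟨l, j⟩, hj⟩ := γ
  rw [nu_eq, nu_eq, ← Finset.sum_sub_distrib]
  rw [Finset.sum_eq_single_of_mem j (Finset.mem_univ j)]
  · simp only [eq_self_iff_true, if_true]
    rw [bM, xv_ne n hn k i hi, Xv_ne n l j hj, vmv_sub_left]
  · intro q _ hq
    simp [if_neg hq]

lemma F_mem_net (x : GI n) : F n hn x ∈ net n := by
  have hmem : ∀ (k l : Fin C) (σ : Fin (n l) → Fin (n k)), nu n k l σ ∈ net n := by
    intro k l σ
    exact Submodule.subset_span ⟨k, l, σ, rfl⟩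
  rcases x with ⟨k, l⟩ | ⟨β, l⟩ | ⟨β, γ⟩
  · rw [F, cM_eq_nu]; exact hmem _ _ _
  · rw [F, aM_eq]; exact sub_mem (hmem _ _ _) (hmem _ _ _)
  · rw [F, bM_eq]; exact sub_mem (hmem _ _ _) (hmem _ _ _)

lemma nu_mem_span (k l : Fin C) (σ : Fin (n l) → Fin (n k)) :
    nu n k l σ ∈ Submodule.span ℝ (Set.range (F n hn)) := by
  have hFc : ∀ k l, cM n hn k l ∈ Submodule.span ℝ (Set.range (F n hn)) :=
    fun k l => Submodule.subset_span ⟨Sum.inl (k, l), rfl⟩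
  have hFa : ∀ β l, aM n hn β l ∈ Submodule.span ℝ (Set.range (F n hn)) :=
    fun β l => Submodule.subset_span ⟨Sum.inr (Sum.inl (β, l)), rfl⟩
  have hFb : ∀ β γ, bM n hn β γ ∈ Submodule.span ℝ (Set.range (F n hn)) :=
    fun β γ => Submodule.subset_span ⟨Sum.inr (Sum.inr (β, γ)), rfl⟩
  have hsplit : nu n k l σ = cM n hn k l +
      ∑ j : Fin (n l), vecMulVec
        (if h : (σ j : ℕ) = 0 then 0 else xv n hn k (σ j)) (ev n ⟨l, j⟩) := by
    rw [nu_eq, cM, xv_zero n hn k ⟨0, hn k⟩ rfl, Xv_zero n l ⟨0, hn l⟩ rfl, vmv_sum_right,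
      ← Finset.sum_add_distrib]
    refine Finset.sum_congr rfl fun j _ => ?_
    by_cases h : (σ j : ℕ) = 0
    · rw [dif_pos h]
      have : (⟨k, σ j⟩ : Idx n) = ⟨k, ⟨0, hn k⟩⟩ := by
        congr 1; exact Fin.ext h
      rw [this]
      ext a b; simp [vecMulVec_apply]
    · rw [dif_neg h, ← vmv_add_left]
      rw [ev_eq_add n hn k (σ j) h, xv_zero n hn k ⟨0, hn k⟩ rfl, add_comm]
  rw [hsplit]
  refine add_mem (hFc k l) (Submodule.sum_mem _ fun j _ => ?_)
  by_cases h : (σ j : ℕ) = 0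
  · rw [dif_pos h]
    have : vecMulVec (0 : Idx n → ℝ) (ev n ⟨l, j⟩) = 0 := by
      ext a b; simp [vecMulVec_apply]
    rw [this]; exact zero_mem _
  · rw [dif_neg h]
    set β : Cocolor n := ⟨⟨k, σ j⟩, h⟩ with hβ
    by_cases hj : (j : ℕ) = 0
    · -- ev ⟨l,j⟩ = Xv l 0 - ∑_{q ≠ 0} Xv l q
      have hdecomp : ev n (⟨l, j⟩ : Idx n) = Xv n l ⟨0, hn l⟩
          - ∑ q ∈ Finset.univ.filter (fun q : Fin (n l) => (q : ℕ) ≠ 0), Xv n l q := by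
        rw [Xv_zero n l ⟨0, hn l⟩ rfl]
        have hfil : Finset.univ.filter (fun q : Fin (n l) => ¬ (q : ℕ) ≠ 0) = {j} := by
          ext q
          simp [Fin.ext_iff, hj]
        rw [← Finset.sum_filter_add_sum_filter_not Finset.univ
          (fun q : Fin (n l) => (q : ℕ) ≠ 0) (fun q => ev n ⟨l, q⟩), hfil,
          Finset.sum_singleton]
        have : ∑ q ∈ Finset.univ.filter (fun q : Fin (n l) => (q : ℕ) ≠ 0), ev n ⟨l, q⟩
            = ∑ q ∈ Finset.univ.filter (fun q : Fin (n l) => (q : ℕ) ≠ 0), Xv n l q := by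
          refine Finset.sum_congr rfl fun q hq => ?_
          rw [Xv_ne n l q (Finset.mem_filter.mp hq).2]
        rw [this]
        abel
      rw [hdecomp, vmv_sub_right, vmv_sum_right]
      refine sub_mem (hFa β l) (Submodule.sum_mem _ fun q hq => ?_)
      exact hFb β ⟨⟨l, q⟩, (Finset.mem_filter.mp hq).2⟩
    · rw [← Xv_ne n l j hj]
      exact hFb β ⟨⟨l, j⟩, hj⟩

lemma net_eq_span : net n = Submodule.span ℝ (Set.range (F n hn)) := by
  apply le_antisymm
  · rw [net]
    apply Submodule.span_le.2
    rintro M ⟨k, l, σ, rfl⟩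
    exact nu_mem_span n hn k l σ
  · apply Submodule.span_le.2
    rintro M ⟨x, rfl⟩
    exact F_mem_net n hn x


lemma ev_mem_span_xv (p : Idx n) :
    ev n p ∈ Submodule.span ℝ (Set.range fun q : Idx n => xv n hn q.1 q.2) := by
  obtain ⟨k, i⟩ := p
  by_cases hi : (i : ℕ) = 0
  · rw [← xv_zero n hn k i hi]
    exact Submodule.subset_span ⟨⟨k, i⟩, rfl⟩
  · rw [ev_eq_add n hn k i hi]
    exact add_mem (Submodule.subset_span ⟨⟨k, i⟩, rfl⟩)
      (Submodule.subset_span ⟨⟨k, ⟨0, hn k⟩⟩, rfl⟩)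

lemma ev_zero_decomp (l : Fin C) (j : Fin (n l)) (hj : (j : ℕ) = 0) :
    ev n (⟨l, j⟩ : Idx n) = Xv n l ⟨0, hn l⟩
      - ∑ q ∈ Finset.univ.filter (fun q : Fin (n l) => (q : ℕ) ≠ 0), Xv n l q := by
  rw [Xv_zero n l ⟨0, hn l⟩ rfl]
  have hfil : Finset.univ.filter (fun q : Fin (n l) => ¬ (q : ℕ) ≠ 0) = {j} := by
    ext q
    simp [Fin.ext_iff, hj]
  rw [← Finset.sum_filter_add_sum_filter_not Finset.univ
    (fun q : Fin (n l) => (q : ℕ) ≠ 0) (fun q => ev n ⟨l, q⟩), hfil, Finset.sum_singleton]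
  have : ∑ q ∈ Finset.univ.filter (fun q : Fin (n l) => (q : ℕ) ≠ 0), ev n ⟨l, q⟩
      = ∑ q ∈ Finset.univ.filter (fun q : Fin (n l) => (q : ℕ) ≠ 0), Xv n l q := by
    refine Finset.sum_congr rfl fun q hq => ?_
    rw [Xv_ne n l q (Finset.mem_filter.mp hq).2]
  rw [this]
  abel

include hn in
lemma ev_mem_span_Xv (p : Idx n) :
    ev n p ∈ Submodule.span ℝ (Set.range fun q : Idx n => Xv n q.1 q.2) := by
  obtain ⟨k, i⟩ := p
  by_cases hi : (i : ℕ) = 0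
  · rw [ev_zero_decomp n hn k i hi]
    exact sub_mem (Submodule.subset_span ⟨⟨k, ⟨0, hn k⟩⟩, rfl⟩)
      (Submodule.sum_mem _ fun q hq => Submodule.subset_span ⟨⟨k, q⟩, rfl⟩)
  · rw [← Xv_ne n k i hi]
    exact Submodule.subset_span ⟨⟨k, i⟩, rfl⟩

lemma span_xv : ⊤ ≤ Submodule.span ℝ (Set.range fun q : Idx n => xv n hn q.1 q.2) := by
  rw [← (Pi.basisFun ℝ (Idx n)).span_eq]
  apply Submodule.span_le.2
  rintro _ ⟨p, rfl⟩
  have : (Pi.basisFun ℝ (Idx n)) p = ev n p := by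
    simp [Pi.basisFun_apply, ev]
  rw [this]
  exact ev_mem_span_xv n hn p

include hn in
lemma span_Xv : ⊤ ≤ Submodule.span ℝ (Set.range fun q : Idx n => Xv n q.1 q.2) := by
  rw [← (Pi.basisFun ℝ (Idx n)).span_eq]
  apply Submodule.span_le.2
  rintro _ ⟨p, rfl⟩
  have : (Pi.basisFun ℝ (Idx n)) p = ev n p := by
    simp [Pi.basisFun_apply, ev]
  rw [this]
  exact ev_mem_span_Xv n hn p

lemma card_finrank : Fintype.card (Idx n) = Module.finrank ℝ (Idx n → ℝ) := by
  simp [Module.finrank_pi]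

noncomputable def bx : Module.Basis (Idx n) ℝ (Idx n → ℝ) :=
  basisOfTopLeSpanOfCardEqFinrank _ (span_xv n hn) (card_finrank n)

noncomputable def bw : Module.Basis (Idx n) ℝ (Idx n → ℝ) :=
  basisOfTopLeSpanOfCardEqFinrank _ (span_Xv n hn) (card_finrank n)

lemma bx_apply (p : Idx n) : bx n hn p = xv n hn p.1 p.2 := by
  rw [bx, coe_basisOfTopLeSpanOfCardEqFinrank]

lemma bw_apply (p : Idx n) : bw n hn p = Xv n p.1 p.2 := by
  rw [bw, coe_basisOfTopLeSpanOfCardEqFinrank]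

noncomputable def P : Matrix (Idx n) (Idx n) ℝ := (Pi.basisFun ℝ (Idx n)).toMatrix (bx n hn)

noncomputable def Q : Matrix (Idx n) (Idx n) ℝ := ((Pi.basisFun ℝ (Idx n)).toMatrix (bw n hn))ᵀ

lemma P_apply (i : Idx n) (p : Idx n) : P n hn i p = xv n hn p.1 p.2 i := by
  rw [P, Module.Basis.toMatrix_apply, Pi.basisFun_repr, bx_apply]

lemma Q_apply (q : Idx n) (j : Idx n) : Q n hn q j = Xv n q.1 q.2 j := by
  rw [Q, Matrix.transpose_apply, Module.Basis.toMatrix_apply, Pi.basisFun_repr, bw_apply]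

noncomputable instance : Invertible (P n hn) := (Pi.basisFun ℝ (Idx n)).invertibleToMatrix (bx n hn)

noncomputable instance : Invertible (Q n hn) :=
  letI := (Pi.basisFun ℝ (Idx n)).invertibleToMatrix (bw n hn)
  Matrix.invertibleTranspose _

noncomputable def fP : Matrix (Idx n) (Idx n) ℝ →ₗ[ℝ] Matrix (Idx n) (Idx n) ℝ where
  toFun M := P n hn * M * Q n hn
  map_add' M M' := by simp [Matrix.mul_add, Matrix.add_mul]
  map_smul' r M := by simp [Matrix.mul_smul, Matrix.smul_mul]

lemma fP_ker : LinearMap.ker (fP n hn) = ⊥ := by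
  rw [LinearMap.ker_eq_bot]
  intro M M' h
  have h2 := congrArg (fun X => ⅟(P n hn) * X * ⅟(Q n hn)) h
  simpa [fP, Matrix.mul_assoc, Matrix.invOf_mul_cancel_left] using h2

lemma fP_std (p q : Idx n) :
    fP n hn (Matrix.single p q 1) = vecMulVec (xv n hn p.1 p.2) (Xv n q.1 q.2) := by
  have hrep : fP n hn (Matrix.single p q 1)
      = P n hn * Matrix.single p q 1 * Q n hn := rfl
  rw [hrep]
  ext i j
  rw [Matrix.mul_apply, vecMulVec_apply, ← P_apply n hn i p, ← Q_apply n hn q j]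
  rw [Finset.sum_eq_single q]
  · rw [Matrix.mul_apply, Finset.sum_eq_single p]
    · simp [Matrix.single]
    · intro b _ hb; simp [Matrix.single, Ne.symm hb]
    · simp
  · intro b _ hb
    rw [Matrix.mul_apply]
    have : ∀ a, P n hn i a * Matrix.single p q 1 a b = 0 := by
      intro a; simp [Matrix.single, Ne.symm hb]
    simp [this]
  · simp

lemma li_g : LinearIndependent ℝ
    (fun pq : Idx n × Idx n => vecMulVec (xv n hn pq.1.1 pq.1.2) (Xv n pq.2.1 pq.2.2)) := by
  have h0 := (Matrix.stdBasis ℝ (Idx n) (Idx n)).linearIndependent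
  have h1 := h0.map' (fP n hn) (fP_ker n hn)
  have h2 : (fun pq : Idx n × Idx n => vecMulVec (xv n hn pq.1.1 pq.1.2) (Xv n pq.2.1 pq.2.2))
      = ⇑(fP n hn) ∘ ⇑(Matrix.stdBasis ℝ (Idx n) (Idx n)) := by
    funext pq
    obtain ⟨p, q⟩ := pq
    rw [Function.comp_apply, Matrix.stdBasis_eq_single, fP_std]
  rw [h2]
  exact h1

noncomputable def emb : GI n → Idx n × Idx n
  | .inl (k, l) => (⟨k, ⟨0, hn k⟩⟩, ⟨l, ⟨0, hn l⟩⟩)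
  | .inr (.inl (β, l)) => (β.1, ⟨l, ⟨0, hn l⟩⟩)
  | .inr (.inr (β, γ)) => (β.1, γ.1)

lemma emb_inj : Function.Injective (emb n hn) := by
  intro a b h
  have h1 := congrArg Prod.fst h
  have h2 := congrArg Prod.snd h
  have v1 := congrArg (fun p : Idx n => (p.2 : ℕ)) h1
  have v2 := congrArg (fun p : Idx n => (p.2 : ℕ)) h2
  rcases a with ⟨k, l⟩ | ⟨β, l⟩ | ⟨β, γ⟩ <;> rcases b with ⟨k', l'⟩ | ⟨β', l'⟩ | ⟨β', γ'⟩ <;>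
    simp only [emb] at h1 h2 v1 v2
  · have hk : k = k' := congrArg Sigma.fst h1
    have hl : l = l' := congrArg Sigma.fst h2
    rw [hk, hl]
  · exact absurd v1.symm β'.2
  · exact absurd v1.symm β'.2
  · exact absurd v1 β.2
  · have hβ : β = β' := Subtype.ext h1
    have hl : l = l' := congrArg Sigma.fst h2
    rw [hβ, hl]
  · exact absurd v2.symm γ'.2
  · exact absurd v1 β.2
  · exact absurd v2 γ.2
  · have hβ : β = β' := Subtype.ext h1
    have hγ : γ = γ' := Subtype.ext h2
    rw [hβ, hγ]

lemma F_eq_comp : F n hn = (fun pq : Idx n × Idx n =>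
    vecMulVec (xv n hn pq.1.1 pq.1.2) (Xv n pq.2.1 pq.2.2)) ∘ emb n hn := by
  funext x
  rcases x with ⟨k, l⟩ | ⟨β, l⟩ | ⟨β, γ⟩ <;> rfl

lemma li_F : LinearIndependent ℝ (F n hn) := by
  rw [F_eq_comp]
  exact (li_g n hn).comp _ (emb_inj n hn)

include hn in
lemma card_cocolor : Fintype.card (Cocolor n) = (∑ c, n c) - C := by
  have e : {p : Idx n // (p.2 : ℕ) = 0} ≃ Fin C :=
    { toFun := fun p => p.1.1
      invFun := fun c => ⟨⟨c, ⟨0, hn c⟩⟩, rfl⟩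
      left_inv := by
        rintro ⟨⟨c, i⟩, h⟩
        apply Subtype.ext
        exact congrArg (Sigma.mk c) (Fin.ext h.symm)
      right_inv := fun c => rfl }
  have h2 : Fintype.card {p : Idx n // (p.2 : ℕ) = 0} = C := by
    rw [Fintype.card_congr e, Fintype.card_fin]
  have h3 : Fintype.card (Cocolor n) = Fintype.card (Idx n) - Fintype.card {p : Idx n // (p.2 : ℕ) = 0} := by
    exact Fintype.card_subtype_compl _
  rw [h3, h2]
  congr 1
  simp

include hn in
lemma finrank_net : Module.finrank ℝ (net n) = Fintype.card (GI n) := by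
  rw [net_eq_span n hn, finrank_span_eq_card (li_F n hn)]

end NetAux


/-- The dimension of `net_{C,N}` equals `C² + B·C + B² = N² - B·C` with `B = N - C`. -/
theorem stmt2 {C : ℕ} (hC : 0 < C) (n : Fin C → ℕ) (hn : ∀ c, 0 < n c) :
    Module.finrank ℝ ↥(net n)
        = C ^ 2 + ((∑ c, n c) - C) * C + ((∑ c, n c) - C) ^ 2 ∧
    Module.finrank ℝ ↥(net n) = (∑ c, n c) ^ 2 - ((∑ c, n c) - C) * C := by
  have hcard := NetAux.finrank_net n hn
  have hGI : Fintype.card (NetAux.GI n)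
      = C * C + ((∑ c, n c) - C) * C + ((∑ c, n c) - C) * ((∑ c, n c) - C) := by
    simp only [NetAux.GI, Fintype.card_sum, Fintype.card_prod, NetAux.card_cocolor n hn,
      Fintype.card_fin]
    ring
  have hCN : C ≤ ∑ c, n c := by
    calc C = ∑ _c : Fin C, 1 := by simp
    _ ≤ ∑ c, n c := Finset.sum_le_sum fun c _ => hn c
  obtain ⟨B, hB⟩ := Nat.exists_eq_add_of_le hCN
  constructor
  · rw [hcard, hGI, hB, Nat.add_sub_cancel_left]
    ring
  · rw [hcard, hGI, hB, Nat.add_sub_cancel_left]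
    have hexp : (C + B) ^ 2 = (C * C + B * C + B * B) + B * C := by ring
    rw [hexp, Nat.add_sub_cancel]
end

section
/- Fix colors k,l ∈ {1,…,C}. Define μ^{l,0}_{k,0} := ν(σ₀) where σ₀ : {0,…,n_l−1} → {0,…,n_k−1} is the constant map 0, and for i ∈ {0,…,n_l−1}, j ∈ {1,…,n_k−1} define μ^{l,i}_{k,j} := ν(σ_{i,j}) where σ_{i,j}(i) = j and σ_{i,j}(q) = 0 for q ≠ i. Then the following matrix identities hold: (a) μ^{l,0}_{k,0} = 𝔠^k_l; (b) for 1 ≤ i ≤ n_l−1 and 1 ≤ j ≤ n_k−1, μ^{l,i}_{k,j} = 𝔠^k_l + 𝔟^{(k,j)}_{(l,i)}; (c) for 1 ≤ j ≤ n_k−1, μ^{l,0}_{k,j} = 𝔠^k_l + 𝔞^{(k,j)}_l − Σ_{q=1}^{n_l−1} 𝔟^{(k,j)}_{(l,q)}. -/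
open Matrix BigOperators

lemma std_eq_vmv {C : ℕ} {n : Fin C → ℕ} (p q : Idx n) :
    Matrix.single p q (1:ℝ) = vecMulVec (Pi.single p 1) (Pi.single q 1) := by
  ext a b
  by_cases h1 : p = a <;> by_cases h2 : q = b <;>
    simp [Matrix.single, vecMulVec_apply, Pi.single_apply, h1, h2]

lemma vmv_sum_right {C : ℕ} {n : Fin C → ℕ} {ι : Type*} (u : Idx n → ℝ) (s : Finset ι)
    (v : ι → Idx n → ℝ) :
    vecMulVec u (∑ i ∈ s, v i) = ∑ i ∈ s, vecMulVec u (v i) := by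
  ext a b
  simp [vecMulVec_apply, Matrix.sum_apply, Finset.sum_apply, Finset.mul_sum]

lemma vmv_sub_left {C : ℕ} {n : Fin C → ℕ} (u w v : Idx n → ℝ) :
    vecMulVec (u - w) v = vecMulVec u v - vecMulVec w v := by
  ext a b
  simp [vecMulVec_apply, sub_mul]

lemma sum_split {C : ℕ} {n : Fin C → ℕ} {m : ℕ}
    (F G : Fin m → Matrix (Idx n) (Idx n) ℝ) (i : Fin m)
    (h : ∀ q, q ≠ i → F q = G q) :
    ∑ q, F q = ∑ q, G q + F i - G i := by
  rw [← Finset.sum_erase_add _ F (Finset.mem_univ i),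
      ← Finset.sum_erase_add _ G (Finset.mem_univ i),
      Finset.sum_congr rfl (fun q hq => h q (Finset.ne_of_mem_erase hq))]
  abel

lemma sum_cocolor {C : ℕ} (n : Fin C → ℕ) (l : Fin C) {M : Type*} [AddCommMonoid M]
    (f : Idx n → M) :
    ∑ γ ∈ Finset.univ.filter (fun γ : Cocolor n => γ.1.1 = l), f γ.1
      = ∑ i ∈ Finset.univ.filter (fun i : Fin (n l) => (i : ℕ) ≠ 0), f ⟨l, i⟩ := by
  rw [Finset.sum_filter]
  have h1 : (∑ γ : Cocolor n, if γ.1.1 = l then f γ.1 else 0)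
      = ∑ p ∈ Finset.univ.filter (fun p : Idx n => (p.2 : ℕ) ≠ 0),
          (if p.1 = l then f p else 0) := by
    exact (Finset.sum_subtype (p := fun p : Idx n => (p.2 : ℕ) ≠ 0) _ (by simp)
      (fun p : Idx n => if p.1 = l then f p else 0)).symm
  rw [h1, Finset.sum_filter, ← Finset.univ_sigma_univ, Finset.sum_sigma]
  rw [Finset.sum_eq_single l]
  · simp [Finset.sum_filter]
  · intro c _ hc
    exact Finset.sum_eq_zero (fun i _ => by simp [hc])
  · simp

/-- Expression of the basis elements `μ` in terms of `𝔠`, `𝔞`, `𝔟`. -/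
theorem stmt3 {C : ℕ} (hC : 0 < C) (n : Fin C → ℕ) (hn : ∀ c, 0 < n c) (k l : Fin C) :
    (nu n k l (fun _ => (⟨0, hn k⟩ : Fin (n k))) = cM n hn k l) ∧
    (∀ (i : Fin (n l)) (j : Fin (n k)) (hi : (i : ℕ) ≠ 0) (hj : (j : ℕ) ≠ 0),
      nu n k l (fun q => if q = i then j else (⟨0, hn k⟩ : Fin (n k)))
        = cM n hn k l + bM n hn ⟨⟨k, j⟩, hj⟩ ⟨⟨l, i⟩, hi⟩) ∧
    (∀ (j : Fin (n k)) (hj : (j : ℕ) ≠ 0),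
      nu n k l (fun q => if q = (⟨0, hn l⟩ : Fin (n l)) then j else (⟨0, hn k⟩ : Fin (n k)))
        = cM n hn k l + aM n hn ⟨⟨k, j⟩, hj⟩ l
          - ∑ γ ∈ Finset.univ.filter (fun γ : Cocolor n => γ.1.1 = l),
              bM n hn ⟨⟨k, j⟩, hj⟩ γ) := by
  have hcM : cM n hn k l
      = ∑ q : Fin (n l), Matrix.single (⟨k, ⟨0, hn k⟩⟩ : Idx n) (⟨l, q⟩ : Idx n) 1 := by
    rw [cM, xv, Xv, if_pos rfl, if_pos rfl, vmv_sum_right]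
    exact Finset.sum_congr rfl (fun q _ => (std_eq_vmv _ _).symm)
  refine ⟨?_, ?_, ?_⟩
  · rw [nu, hcM]
  · intro i j hi hj
    have hbM : bM n hn ⟨⟨k, j⟩, hj⟩ ⟨⟨l, i⟩, hi⟩
        = Matrix.single (⟨k, j⟩ : Idx n) (⟨l, i⟩ : Idx n) 1
          - Matrix.single (⟨k, ⟨0, hn k⟩⟩ : Idx n) (⟨l, i⟩ : Idx n) 1 := by
      rw [bM, xv, Xv, if_neg hj, if_neg hi, vmv_sub_left, std_eq_vmv, std_eq_vmv]
    rw [nu, sum_split _ (fun q => Matrix.single (⟨k, ⟨0, hn k⟩⟩ : Idx n) (⟨l, q⟩ : Idx n) 1)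
      i (fun q hq => by rw [if_neg hq]), if_pos rfl, hcM, hbM]
    abel
  · intro j hj
    set z : Fin (n l) := ⟨0, hn l⟩ with hz
    have hfe : Finset.univ.filter (fun i : Fin (n l) => (i : ℕ) ≠ 0)
        = Finset.univ.erase z := by
      ext i
      simp [Fin.ext_iff, hz, eq_comm]
    have haM : aM n hn ⟨⟨k, j⟩, hj⟩ l
        = ∑ q : Fin (n l), (Matrix.single (⟨k, j⟩ : Idx n) (⟨l, q⟩ : Idx n) 1
            - Matrix.single (⟨k, ⟨0, hn k⟩⟩ : Idx n) (⟨l, q⟩ : Idx n) 1) := by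
      rw [aM, xv, Xv, if_neg hj, if_pos rfl, vmv_sum_right]
      refine Finset.sum_congr rfl (fun q _ => ?_)
      rw [vmv_sub_left, std_eq_vmv, std_eq_vmv]
    rw [← Finset.sum_erase_add _ _ (Finset.mem_univ z)] at haM
    have hbsum : (∑ γ ∈ Finset.univ.filter (fun γ : Cocolor n => γ.1.1 = l),
          bM n hn ⟨⟨k, j⟩, hj⟩ γ)
        = ∑ q ∈ Finset.univ.erase z,
            (Matrix.single (⟨k, j⟩ : Idx n) (⟨l, q⟩ : Idx n) 1
              - Matrix.single (⟨k, ⟨0, hn k⟩⟩ : Idx n) (⟨l, q⟩ : Idx n) 1) := by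
      rw [← hfe]
      have := sum_cocolor n l (fun p : Idx n => vecMulVec (xv n hn k j) (Xv n p.1 p.2))
      rw [show (fun γ : Cocolor n => bM n hn ⟨⟨k, j⟩, hj⟩ γ)
          = (fun γ : Cocolor n => vecMulVec (xv n hn k j) (Xv n γ.1.1 γ.1.2)) from rfl]
      rw [this]
      refine Finset.sum_congr rfl (fun q hq => ?_)
      have hq0 : (q : ℕ) ≠ 0 := (Finset.mem_filter.mp hq).2
      rw [xv, Xv, if_neg hj, if_neg hq0, vmv_sub_left, std_eq_vmv, std_eq_vmv]
    rw [nu, sum_split _ (fun q => Matrix.single (⟨k, ⟨0, hn k⟩⟩ : Idx n) (⟨l, q⟩ : Idx n) 1)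
      z (fun q hq => by rw [if_neg hq]), if_pos rfl, hcM, haM, hbsum,
      ← Finset.sum_erase_add _ _ (Finset.mem_univ z)]
    abel
end

section
/- Let 𝔄 ⊆ gl_N(ℝ) be the ℝ-span of all matrices 𝔞^{(k,j)}_l, let 𝔅 be the ℝ-span of all 𝔟^{(k,j)}_{(l,i)}, and let ℭ be the ℝ-span of all 𝔠^k_l. Then net_{C,N} is the internal direct sum 𝔄 ⊕ 𝔅 ⊕ ℭ: the three subspaces are linearly independent and their sum equals net_{C,N}. -/
open Matrix BigOperators

section Aux
variable {C : ℕ} {n : Fin C → ℕ} (hn : ∀ c, 0 < n c)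

lemma vmm_sub_left (x y X : Idx n → ℝ) :
    vecMulVec (x - y) X = vecMulVec x X - vecMulVec y X := by
  ext p q; simp [vecMulVec_apply, sub_mul]

lemma vmm_sub_right (x X Y : Idx n → ℝ) :
    vecMulVec x (X - Y) = vecMulVec x X - vecMulVec x Y := by
  ext p q; simp [vecMulVec_apply, mul_sub]

lemma vmm_sum_right {ι : Type*} (s : Finset ι) (x : Idx n → ℝ) (f : ι → Idx n → ℝ) :
    vecMulVec x (∑ i ∈ s, f i) = ∑ i ∈ s, vecMulVec x (f i) := by
  ext p q; simp [vecMulVec_apply, Finset.mul_sum, Finset.sum_apply, Matrix.sum_apply]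

lemma stdB_eq (p q : Idx n) :
    Matrix.single p q (1:ℝ) = vecMulVec (Pi.single p 1) (Pi.single q 1) := by
  ext a b
  by_cases h1 : p = a <;> by_cases h2 : q = b <;>
    simp [Matrix.single, vecMulVec_apply, Pi.single_apply, h1, h2]

lemma idx_eq_val {k l : Fin C} {i : Fin (n k)} {j : Fin (n l)}
    (h : (⟨k,i⟩ : Idx n) = ⟨l,j⟩) : (i : ℕ) = (j : ℕ) := by
  obtain ⟨h1, h2⟩ := Sigma.mk.inj_iff.mp h
  subst h1
  exact congrArg Fin.val (eq_of_heq h2)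

lemma idx_eq_fst {k l : Fin C} {i : Fin (n k)} {j : Fin (n l)}
    (h : (⟨k,i⟩ : Idx n) = ⟨l,j⟩) : k = l := congrArg Sigma.fst h

lemma idx_eq_of {k l : Fin C} {i : Fin (n k)} {j : Fin (n l)}
    (h1 : k = l) (h2 : (i : ℕ) = (j : ℕ)) : (⟨k,i⟩ : Idx n) = ⟨l,j⟩ := by
  subst h1; exact congrArg _ (Fin.ext h2)

lemma sum_single_apply (k l : Fin C) (j : Fin (n l)) :
    (∑ q : Fin (n k), (Pi.single (⟨k,q⟩ : Idx n) (1:ℝ) : Idx n → ℝ)) ⟨l,j⟩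
      = if k = l then 1 else 0 := by
  rw [Finset.sum_apply]
  by_cases h : k = l
  · subst h; simp [Pi.single_apply, Sigma.mk.inj_iff]
  · rw [if_neg h, Finset.sum_eq_zero]
    intro q _
    rw [Pi.single_apply, if_neg]
    intro he; exact h (idx_eq_fst he.symm)

lemma Xv_dot_xv (k : Fin C) (i : Fin (n k)) (l : Fin C) (j : Fin (n l)) :
    Xv n k i ⬝ᵥ xv n hn l j = if (⟨k,i⟩ : Idx n) = ⟨l,j⟩ then 1 else 0 := by
  classical
  unfold Xv xv
  by_cases hi : (i : ℕ) = 0 <;> by_cases hj : (j : ℕ) = 0 <;>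
    simp only [hi, hj, if_true, if_false, if_pos, if_neg, not_false_iff, one_ne_zero]
  · rw [dotProduct_single, mul_one, sum_single_apply]
    by_cases h : k = l
    · rw [if_pos h, if_pos (idx_eq_of h (hi.trans hj.symm))]
    · rw [if_neg h, if_neg (fun he => h (idx_eq_fst he))]
  · rw [dotProduct_sub, dotProduct_single, dotProduct_single, mul_one, mul_one,
      sum_single_apply, sum_single_apply, sub_self, if_neg]
    intro he; exact hj ((idx_eq_val he).symm.trans hi)
  · rw [single_dotProduct, one_mul, Pi.single_apply, if_neg
      (fun he => hi ((idx_eq_val (n := n) he).trans hj))]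
  · rw [dotProduct_sub, single_dotProduct, single_dotProduct, one_mul, one_mul,
      Pi.single_apply, Pi.single_apply,
      if_neg (fun he : (⟨k,i⟩:Idx n) = ⟨l,⟨0, hn l⟩⟩ => hi (idx_eq_val he)), sub_zero]

lemma xv_zero (k : Fin C) :
    xv n hn k ⟨0, hn k⟩ = Pi.single (⟨k, ⟨0, hn k⟩⟩ : Idx n) 1 := by simp [xv]

lemma xv_ne (k : Fin C) {j : Fin (n k)} (hj : (j : ℕ) ≠ 0) :
    xv n hn k j = Pi.single (⟨k, j⟩ : Idx n) 1 - Pi.single (⟨k, ⟨0, hn k⟩⟩ : Idx n) 1 := by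
  simp [xv, hj]

lemma Xv_zero (l : Fin C) :
    Xv n l ⟨0, hn l⟩ = ∑ q : Fin (n l), Pi.single (⟨l, q⟩ : Idx n) 1 := by simp [Xv]

lemma Xv_ne (l : Fin C) {i : Fin (n l)} (hi : (i : ℕ) ≠ 0) :
    Xv n l i = Pi.single (⟨l, i⟩ : Idx n) 1 := by simp [Xv, hi]

lemma nu_const (k l : Fin C) (m : Fin (n k)) :
    nu n k l (fun _ => m) = vecMulVec (Pi.single (⟨k, m⟩ : Idx n) 1) (Xv n l ⟨0, hn l⟩) := by
  rw [Xv_zero, vmm_sum_right]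
  exact Finset.sum_congr rfl fun j _ => stdB_eq _ _

lemma cM_eq (k l : Fin C) : cM n hn k l = nu n k l (fun _ => ⟨0, hn k⟩) := by
  rw [nu_const, cM, xv_zero]

lemma aM_eq (β : Cocolor n) (l : Fin C) :
    aM n hn β l = nu n β.1.1 l (fun _ => β.1.2)
      - nu n β.1.1 l (fun _ => ⟨0, hn β.1.1⟩) := by
  rw [aM, xv_ne hn _ β.2, vmm_sub_left, ← nu_const hn, ← nu_const hn]

lemma bM_eq (β γ : Cocolor n) :
    bM n hn β γ = nu n β.1.1 γ.1.1 (fun q => if q = γ.1.2 then β.1.2 else ⟨0, hn β.1.1⟩)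
      - nu n β.1.1 γ.1.1 (fun _ => ⟨0, hn β.1.1⟩) := by
  rw [nu, nu, ← Finset.sum_sub_distrib, Finset.sum_eq_single γ.1.2]
  · rw [if_pos rfl, stdB_eq, stdB_eq, ← vmm_sub_left, bM, ← xv_ne hn _ β.2, ← Xv_ne _ γ.2]
  · intro q _ hq; rw [if_neg hq, sub_self]
  · intro h; exact absurd (Finset.mem_univ _) h

noncomputable def Fl (u v : Idx n → ℝ) : Matrix (Idx n) (Idx n) ℝ →ₗ[ℝ] ℝ where
  toFun M := u ⬝ᵥ M *ᵥ v
  map_add' M N := by rw [Matrix.add_mulVec, dotProduct_add]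
  map_smul' r M := by rw [Matrix.smul_mulVec, dotProduct_smul]; rfl

lemma Fl_vmm (u v x X : Idx n → ℝ) :
    Fl u v (vecMulVec x X) = (u ⬝ᵥ x) * (X ⬝ᵥ v) := by
  have h : vecMulVec x X *ᵥ v = (X ⬝ᵥ v) • x := by
    funext p
    simp [mulVec, vecMulVec_apply, dotProduct, Finset.mul_sum, mul_assoc, mul_comm, mul_left_comm]
  show u ⬝ᵥ (vecMulVec x X *ᵥ v) = _
  rw [h, dotProduct_smul, smul_eq_mul, mul_comm]

lemma Fl_vv (k : Fin C) (i : Fin (n k)) (l : Fin C) (j : Fin (n l))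
    (k' : Fin C) (i' : Fin (n k')) (l' : Fin C) (j' : Fin (n l')) :
    Fl (Xv n k i) (xv n hn l j) (vecMulVec (xv n hn k' i') (Xv n l' j'))
      = (if (⟨k,i⟩ : Idx n) = ⟨k',i'⟩ then 1 else 0)
        * (if (⟨l',j'⟩ : Idx n) = ⟨l,j⟩ then 1 else 0) := by
  rw [Fl_vmm, Xv_dot_xv, Xv_dot_xv]

end Aux

/-- `net_{C,N}` is the internal direct sum of the spans of the `𝔞`, `𝔟` and `𝔠` matrices. -/
theorem stmt4 {C : ℕ} (hC : 0 < C) (n : Fin C → ℕ) (hn : ∀ c, 0 < n c) :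
    (Submodule.span ℝ {M | ∃ (β : Cocolor n) (c : Fin C), M = aM n hn β c}
      ⊔ Submodule.span ℝ {M | ∃ β γ : Cocolor n, M = bM n hn β γ}
      ⊔ Submodule.span ℝ {M | ∃ k l : Fin C, M = cM n hn k l}) = net n ∧
    ∀ a ∈ Submodule.span ℝ {M | ∃ (β : Cocolor n) (c : Fin C), M = aM n hn β c},
      ∀ b ∈ Submodule.span ℝ {M | ∃ β γ : Cocolor n, M = bM n hn β γ},
        ∀ c ∈ Submodule.span ℝ {M | ∃ k l : Fin C, M = cM n hn k l},
          a + b + c = 0 → a = 0 ∧ b = 0 ∧ c = 0 := by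
  classical
  set SA := Submodule.span ℝ {M | ∃ (β : Cocolor n) (c : Fin C), M = aM n hn β c} with hSA
  set SB := Submodule.span ℝ {M | ∃ β γ : Cocolor n, M = bM n hn β γ} with hSB
  set SC := Submodule.span ℝ {M | ∃ k l : Fin C, M = cM n hn k l} with hSC
  have haS : ∀ (β : Cocolor n) (l : Fin C), aM n hn β l ∈ SA ⊔ SB ⊔ SC := fun β l =>
    (le_sup_left.trans le_sup_left : SA ≤ SA ⊔ SB ⊔ SC) (Submodule.subset_span ⟨β, l, rfl⟩)
  have hbS : ∀ β γ : Cocolor n, bM n hn β γ ∈ SA ⊔ SB ⊔ SC := fun β γ =>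
    (le_sup_right.trans le_sup_left : SB ≤ SA ⊔ SB ⊔ SC) (Submodule.subset_span ⟨β, γ, rfl⟩)
  have hcS : ∀ k l : Fin C, cM n hn k l ∈ SA ⊔ SB ⊔ SC := fun k l =>
    (le_sup_right : SC ≤ SA ⊔ SB ⊔ SC) (Submodule.subset_span ⟨k, l, rfl⟩)
  constructor
  · apply le_antisymm
    · refine sup_le (sup_le ?_ ?_) ?_
      · rw [hSA, Submodule.span_le]
        rintro M ⟨β, l, rfl⟩
        rw [SetLike.mem_coe, aM_eq hn]
        exact sub_mem (Submodule.subset_span ⟨_, _, _, rfl⟩)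
          (Submodule.subset_span ⟨_, _, _, rfl⟩)
      · rw [hSB, Submodule.span_le]
        rintro M ⟨β, γ, rfl⟩
        rw [SetLike.mem_coe, bM_eq hn]
        exact sub_mem (Submodule.subset_span ⟨_, _, _, rfl⟩)
          (Submodule.subset_span ⟨_, _, _, rfl⟩)
      · rw [hSC, Submodule.span_le]
        rintro M ⟨k, l, rfl⟩
        rw [SetLike.mem_coe, cM_eq hn]
        exact Submodule.subset_span ⟨_, _, _, rfl⟩
    · rw [net, Submodule.span_le]
      rintro M ⟨k, l, σ, rfl⟩
      rw [SetLike.mem_coe]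
      -- key: matrices x^k_m ⊗ e^{(l,j)} for m ≠ 0 lie in the sum
      have hD : ∀ (m : Fin (n k)), (m : ℕ) ≠ 0 → ∀ j : Fin (n l),
          vecMulVec (xv n hn k m) (Pi.single (⟨l, j⟩ : Idx n) 1) ∈ SA ⊔ SB ⊔ SC := by
        intro m hm j
        by_cases hj : (j : ℕ) = 0
        · have hj0 : j = ⟨0, hn l⟩ := Fin.ext hj
          subst hj0
          have key : (Pi.single (⟨l, ⟨0, hn l⟩⟩ : Idx n) (1:ℝ) : Idx n → ℝ)
              = Xv n l ⟨0, hn l⟩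
                - ∑ q ∈ Finset.univ.erase (⟨0, hn l⟩ : Fin (n l)),
                    Pi.single (⟨l, q⟩ : Idx n) 1 := by
            rw [Xv_zero, ← Finset.add_sum_erase _ _ (Finset.mem_univ (⟨0, hn l⟩ : Fin (n l))),
              add_sub_cancel_right]
          rw [key, vmm_sub_right, vmm_sum_right]
          refine sub_mem (haS ⟨⟨k, m⟩, hm⟩ l) (Submodule.sum_mem _ ?_)
          intro q hq
          have hq0 : (q : ℕ) ≠ 0 := fun h => (Finset.ne_of_mem_erase hq) (Fin.ext h)
          have : Pi.single (⟨l, q⟩ : Idx n) (1:ℝ) = Xv n l q := (Xv_ne _ hq0).symm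
          rw [this]
          exact hbS ⟨⟨k, m⟩, hm⟩ ⟨⟨l, q⟩, hq0⟩
        · have : Pi.single (⟨l, j⟩ : Idx n) (1:ℝ) = Xv n l j := (Xv_ne _ hj).symm
          rw [this]
          exact hbS ⟨⟨k, m⟩, hm⟩ ⟨⟨l, j⟩, hj⟩
      have expand : nu n k l σ = nu n k l (fun _ => ⟨0, hn k⟩)
          + ∑ j : Fin (n l), (Matrix.single (⟨k, σ j⟩ : Idx n) (⟨l, j⟩ : Idx n) (1:ℝ)
              - Matrix.single (⟨k, ⟨0, hn k⟩⟩ : Idx n) (⟨l, j⟩ : Idx n) 1) := by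
        rw [Finset.sum_sub_distrib]
        unfold nu
        abel
      rw [expand]
      refine add_mem ?_ (Submodule.sum_mem _ ?_)
      · rw [← cM_eq hn]; exact hcS k l
      · intro j _
        by_cases hs : (σ j : ℕ) = 0
        · have : σ j = ⟨0, hn k⟩ := Fin.ext hs
          rw [this, sub_self]
          exact zero_mem _
        · rw [stdB_eq, stdB_eq, ← vmm_sub_left, ← xv_ne hn _ hs]
          exact hD (σ j) hs j
  · intro a ha b hb c hc habc
    have hra : {M | ∃ (β : Cocolor n) (c : Fin C), M = aM n hn β c}
        = Set.range (fun p : Cocolor n × Fin C => aM n hn p.1 p.2) := by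
      ext M
      constructor
      · rintro ⟨β, l, rfl⟩; exact ⟨(β, l), rfl⟩
      · rintro ⟨⟨β, l⟩, rfl⟩; exact ⟨β, l, rfl⟩
    have hrb : {M | ∃ β γ : Cocolor n, M = bM n hn β γ}
        = Set.range (fun p : Cocolor n × Cocolor n => bM n hn p.1 p.2) := by
      ext M
      constructor
      · rintro ⟨β, γ, rfl⟩; exact ⟨(β, γ), rfl⟩
      · rintro ⟨⟨β, γ⟩, rfl⟩; exact ⟨β, γ, rfl⟩
    have hrc : {M | ∃ k l : Fin C, M = cM n hn k l}
        = Set.range (fun p : Fin C × Fin C => cM n hn p.1 p.2) := by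
      ext M
      constructor
      · rintro ⟨k, l, rfl⟩; exact ⟨(k, l), rfl⟩
      · rintro ⟨⟨k, l⟩, rfl⟩; exact ⟨k, l, rfl⟩
    rw [hSA, hra, Submodule.mem_span_range_iff_exists_fun] at ha
    rw [hSB, hrb, Submodule.mem_span_range_iff_exists_fun] at hb
    rw [hSC, hrc, Submodule.mem_span_range_iff_exists_fun] at hc
    obtain ⟨f, hf⟩ := ha
    obtain ⟨g, hg⟩ := hb
    obtain ⟨h, hh⟩ := hc
    -- c = 0
    have hc0 : c = 0 := by
      rw [← hh]
      apply Finset.sum_eq_zero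
      rintro ⟨k, l⟩ -
      have hev := congrArg (Fl (Xv n k ⟨0, hn k⟩) (xv n hn l ⟨0, hn l⟩)) habc
      rw [map_add, map_add, map_zero, ← hf, ← hg, ← hh, map_sum, map_sum, map_sum] at hev
      simp only [_root_.map_smul, smul_eq_mul] at hev
      have ea : ∀ p : Cocolor n × Fin C,
          f p * (Fl (Xv n k ⟨0, hn k⟩) (xv n hn l ⟨0, hn l⟩)) (aM n hn p.1 p.2) = 0 := by
        rintro ⟨β, m⟩
        rw [aM, Fl_vv hn, if_neg (fun he => β.2 ((idx_eq_val he).symm)), zero_mul, mul_zero]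
      have eb : ∀ p : Cocolor n × Cocolor n,
          g p * (Fl (Xv n k ⟨0, hn k⟩) (xv n hn l ⟨0, hn l⟩)) (bM n hn p.1 p.2) = 0 := by
        rintro ⟨β, γ⟩
        rw [bM, Fl_vv hn, if_neg (fun he => β.2 ((idx_eq_val he).symm)), zero_mul, mul_zero]
      have ec : (∑ p : Fin C × Fin C,
          h p * (Fl (Xv n k ⟨0, hn k⟩) (xv n hn l ⟨0, hn l⟩)) (cM n hn p.1 p.2)) = h (k, l) := by
        rw [Finset.sum_eq_single (k, l)]
        · rw [cM, Fl_vv hn, if_pos rfl, if_pos rfl, mul_one, mul_one]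
        · rintro ⟨k', l'⟩ - hne
          rw [cM, Fl_vv hn]
          by_cases h1 : k = k'
          · by_cases h2 : l' = l
            · exact absurd (Prod.ext h1.symm h2) hne
            · rw [if_neg (fun he => h2 (idx_eq_fst he)), mul_zero, mul_zero]
          · rw [if_neg (fun he => h1 (idx_eq_fst he)), zero_mul, mul_zero]
        · intro hk; exact absurd (Finset.mem_univ _) hk
      rw [Finset.sum_congr rfl (fun p _ => ea p), Finset.sum_congr rfl (fun p _ => eb p),
        Finset.sum_const_zero, Finset.sum_const_zero, zero_add, zero_add, ec] at hev
      rw [hev, zero_smul]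
    -- a = 0
    have ha0 : a = 0 := by
      rw [← hf]
      apply Finset.sum_eq_zero
      rintro ⟨β, l⟩ -
      have hev := congrArg (Fl (Xv n β.1.1 β.1.2) (xv n hn l ⟨0, hn l⟩)) habc
      rw [map_add, map_add, map_zero, ← hf, ← hg, ← hh, map_sum, map_sum, map_sum] at hev
      simp only [_root_.map_smul, smul_eq_mul] at hev
      have eb : ∀ p : Cocolor n × Cocolor n,
          g p * (Fl (Xv n β.1.1 β.1.2) (xv n hn l ⟨0, hn l⟩)) (bM n hn p.1 p.2) = 0 := by
        rintro ⟨β', γ'⟩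
        rw [bM, Fl_vv hn, if_neg (fun he : (⟨γ'.1.1, γ'.1.2⟩ : Idx n) = ⟨l, ⟨0, hn l⟩⟩ => γ'.2 (idx_eq_val he)), mul_zero, mul_zero]
      have ec : ∀ p : Fin C × Fin C,
          h p * (Fl (Xv n β.1.1 β.1.2) (xv n hn l ⟨0, hn l⟩)) (cM n hn p.1 p.2) = 0 := by
        rintro ⟨k', l'⟩
        rw [cM, Fl_vv hn, if_neg (fun he => β.2 (idx_eq_val he)), zero_mul, mul_zero]
      have ea : (∑ p : Cocolor n × Fin C,
          f p * (Fl (Xv n β.1.1 β.1.2) (xv n hn l ⟨0, hn l⟩)) (aM n hn p.1 p.2)) = f (β, l) := by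
        rw [Finset.sum_eq_single (β, l)]
        · rw [aM, Fl_vv hn, if_pos rfl, if_pos rfl, mul_one, mul_one]
        · rintro ⟨β', l'⟩ - hne
          rw [aM, Fl_vv hn]
          by_cases h1 : β = β'
          · by_cases h2 : l' = l
            · exact absurd (Prod.ext h1.symm h2) hne
            · rw [if_neg (fun he => h2 (idx_eq_fst he)), mul_zero, mul_zero]
          · have hne1 : ¬((⟨β.1.1, β.1.2⟩ : Idx n) = ⟨β'.1.1, β'.1.2⟩) := fun he =>
              h1 (Subtype.ext ((Sigma.eta β.1).symm.trans (he.trans (Sigma.eta β'.1))))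
            rw [if_neg hne1, zero_mul, mul_zero]
        · intro hk; exact absurd (Finset.mem_univ _) hk
      rw [Finset.sum_congr rfl (fun p _ => eb p), Finset.sum_congr rfl (fun p _ => ec p),
        Finset.sum_const_zero, Finset.sum_const_zero, add_zero, add_zero, ea] at hev
      rw [hev, zero_smul]
    refine ⟨ha0, ?_, hc0⟩
    rw [ha0, hc0, zero_add, add_zero] at habc
    exact habc
end

section
/- For all cocolors β₁, β₂, β₃ and every color c ∈ {1,…,C}, the matrix commutator satisfies [𝔟^{β₁}_{β₂}, 𝔞^{β₃}_{c}] = δ_{β₂,β₃} 𝔞^{β₁}_{c}, where δ is the Kronecker delta on cocolors. Consequently, for each fixed color c, the span of {𝔞^β_c : β a cocolor} is invariant under the adjoint action of the span of the 𝔟-matrices and carries the standard representation of gl_B. -/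
open Matrix BigOperators

private lemma dot_single' {C : ℕ} {n : Fin C → ℕ} (u : Idx n → ℝ) (a : Idx n) :
    u ⬝ᵥ (Pi.single a 1 : Idx n → ℝ) = u a := by
  simp [dotProduct, Pi.single_apply]

private lemma Xv0_apply' {C : ℕ} (n : Fin C → ℕ) (c : Fin C) (hc : 0 < n c) (p : Idx n) :
    Xv n c ⟨0, hc⟩ p = if p.1 = c then 1 else 0 := by
  simp only [Xv, if_pos rfl]
  obtain ⟨k, j⟩ := p
  by_cases h : k = c
  · subst h
    simp [Finset.sum_apply, Pi.single_apply, Sigma.ext_iff]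
  · simp [Finset.sum_apply, Pi.single_apply, Sigma.ext_iff, h]

private lemma dot_zero' {C : ℕ} (n : Fin C → ℕ) (hn : ∀ c, 0 < n c) (c k : Fin C)
    (j : Fin (n k)) (hj : (j : ℕ) ≠ 0) :
    Xv n c ⟨0, hn c⟩ ⬝ᵥ xv n hn k j = 0 := by
  simp only [xv, if_neg hj, dotProduct_sub, dot_single', Xv0_apply', sub_self]

private lemma dot_delta' {C : ℕ} (n : Fin C → ℕ) (hn : ∀ c, 0 < n c) (γ β : Cocolor n) :
    Xv n γ.1.1 γ.1.2 ⬝ᵥ xv n hn β.1.1 β.1.2 = if γ = β then 1 else 0 := by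
  simp only [xv, if_neg β.2, Xv, if_neg γ.2, dotProduct_sub, dot_single', Pi.single_apply]
  have h1 : (⟨β.1.1, β.1.2⟩ : Idx n) = γ.1 ↔ γ = β := by
    constructor
    · intro h; exact Subtype.ext (by rw [← h])
    · intro h; subst h; rfl
  have h2 : (⟨β.1.1, ⟨0, hn β.1.1⟩⟩ : Idx n) ≠ γ.1 := by
    intro h
    exact γ.2 (by rw [← h])
  rw [if_neg h2, sub_zero]
  simp [h1]

private lemma vmv_mul' {C : ℕ} (n : Fin C → ℕ) (a b c d : Idx n → ℝ) :
    vecMulVec a b * vecMulVec c d = (b ⬝ᵥ c) • vecMulVec a d := by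
  ext i j
  simp only [mul_apply, vecMulVec_apply, Matrix.smul_apply, smul_eq_mul, dotProduct]
  rw [Finset.sum_mul]
  exact Finset.sum_congr rfl fun p _ => by ring

private lemma part1' {C : ℕ} (n : Fin C → ℕ) (hn : ∀ c, 0 < n c)
    (β₁ β₂ β₃ : Cocolor n) (c : Fin C) :
      bM n hn β₁ β₂ * aM n hn β₃ c - aM n hn β₃ c * bM n hn β₁ β₂
        = (if β₂ = β₃ then (1 : ℝ) else 0) • aM n hn β₁ c := by
  unfold bM aM
  rw [vmv_mul', vmv_mul', dot_delta', dot_zero' n hn c β₁.1.1 β₁.1.2 β₁.2, zero_smul, sub_zero]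

private lemma xv_li' {C : ℕ} (n : Fin C → ℕ) (hn : ∀ c, 0 < n c) :
    LinearIndependent ℝ (fun β : Cocolor n => xv n hn β.1.1 β.1.2) := by
  rw [Fintype.linearIndependent_iff]
  intro g hg β
  have h := congrFun hg β.1
  simp only [Finset.sum_apply, Pi.smul_apply, Pi.zero_apply, smul_eq_mul] at h
  rw [Finset.sum_eq_single β] at h
  · have h2 : (⟨β.1.1, ⟨0, hn β.1.1⟩⟩ : Idx n) ≠ β.1 := fun h => β.2 (by rw [← h])
    rw [← h]
    simp [xv, if_neg β.2, Pi.single_apply, Ne.symm h2]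
  · intro γ _ hγ
    simp only [xv, if_neg γ.2, Pi.sub_apply, Pi.single_apply]
    have h1 : β.1 ≠ (⟨γ.1.1, γ.1.2⟩ : Idx n) := fun h => hγ (Subtype.ext (by rw [h]))
    have h2 : β.1 ≠ (⟨γ.1.1, ⟨0, hn γ.1.1⟩⟩ : Idx n) := fun h => β.2 (by rw [h])
    rw [if_neg h1, if_neg h2]; ring
  · intro h; exact absurd (Finset.mem_univ β) h

/-- `[𝔟^{β₁}_{β₂}, 𝔞^{β₃}_c] = δ_{β₂ β₃} 𝔞^{β₁}_c`; for fixed `c`, the span of the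
`𝔞^β_c` is invariant under the adjoint action of the `𝔟`-span and (its elements being
linearly independent) carries the standard representation of `gl_B`. -/
theorem stmt11 {C : ℕ} (hC : 0 < C) (n : Fin C → ℕ) (hn : ∀ c, 0 < n c) :
    (∀ (β₁ β₂ β₃ : Cocolor n) (c : Fin C),
      bM n hn β₁ β₂ * aM n hn β₃ c - aM n hn β₃ c * bM n hn β₁ β₂
        = (if β₂ = β₃ then (1 : ℝ) else 0) • aM n hn β₁ c) ∧
    (∀ c : Fin C,
      ∀ x ∈ Submodule.span ℝ {M | ∃ β γ : Cocolor n, M = bM n hn β γ},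
        ∀ y ∈ Submodule.span ℝ {M | ∃ β : Cocolor n, M = aM n hn β c},
          x * y - y * x ∈ Submodule.span ℝ {M | ∃ β : Cocolor n, M = aM n hn β c}) ∧
    (∀ c : Fin C, LinearIndependent ℝ (fun β : Cocolor n => aM n hn β c)) := by
  refine ⟨fun β₁ β₂ β₃ c => part1' n hn β₁ β₂ β₃ c, ?_, ?_⟩
  · intro c x hx
    induction hx using Submodule.span_induction with
    | mem x hxm =>
      intro y hy
      induction hy using Submodule.span_induction with
      | mem y hym =>
        obtain ⟨β, γ, rfl⟩ := hxm
        obtain ⟨β', rfl⟩ := hym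
        rw [part1']
        exact Submodule.smul_mem _ _ (Submodule.subset_span ⟨β, rfl⟩)
      | zero => simp only [mul_zero, zero_mul, sub_zero]; exact Submodule.zero_mem _
      | add y z hy hz ihy ihz =>
        have h : x * (y + z) - (y + z) * x = (x * y - y * x) + (x * z - z * x) := by
          noncomm_ring
        rw [h]; exact Submodule.add_mem _ ihy ihz
      | smul a y hy ih =>
        have h : x * (a • y) - (a • y) * x = a • (x * y - y * x) := by
          rw [mul_smul_comm, smul_mul_assoc, smul_sub]
        rw [h]; exact Submodule.smul_mem _ _ ih
    | zero =>
      intro y hy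
      simp only [zero_mul, mul_zero, sub_zero]; exact Submodule.zero_mem _
    | add x z hx hz ihx ihz =>
      intro y hy
      have h : (x + z) * y - y * (x + z) = (x * y - y * x) + (z * y - y * z) := by
        noncomm_ring
      rw [h]; exact Submodule.add_mem _ (ihx y hy) (ihz y hy)
    | smul a x hx ih =>
      intro y hy
      have h : (a • x) * y - y * (a • x) = a • (x * y - y * x) := by
        rw [smul_mul_assoc, mul_smul_comm, smul_sub]
      rw [h]; exact Submodule.smul_mem _ _ (ih y hy)
  · intro c
    let L : (Idx n → ℝ) →ₗ[ℝ] Matrix (Idx n) (Idx n) ℝ :=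
      { toFun := fun v => vecMulVec v (Xv n c ⟨0, hn c⟩)
        map_add' := fun a b => by ext i j; simp [vecMulVec_apply, add_mul]
        map_smul' := fun r a => by ext i j; simp [vecMulVec_apply, mul_assoc] }
    have hker : LinearMap.ker L = ⊥ := by
      rw [LinearMap.ker_eq_bot]
      intro a b hab
      funext p
      have h := congrFun (congrFun hab p) ⟨c, ⟨0, hn c⟩⟩
      simpa [L, vecMulVec_apply, Xv0_apply'] using h
    exact (xv_li' n hn).map' L hker
end

section
/- For all colors c₁, c₂ ∈ {1,…,C} and all cocolors β₁, β₂, the matrix commutator satisfies [𝔬^{c₁}_{β₁}, 𝔞^{β₂}_{c₂}] = δ_{β₁,β₂} 𝔠^{c₁}_{c₂} − δ_{c₁,c₂} 𝔟^{β₂}_{β₁}, where δ denotes the Kronecker delta (on cocolors and on colors respectively). -/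
open Matrix BigOperators

theorem myVecMulVec_mul {m : Type*} [Fintype m] (a b c d : m → ℝ) :
    vecMulVec a b * vecMulVec c d = (b ⬝ᵥ c) • vecMulVec a d := by
  ext i j
  simp [Matrix.mul_apply, vecMulVec_apply, dotProduct, Finset.sum_mul, Finset.mul_sum]
  congr 1; ext k; ring

theorem dotA {C : ℕ} (n : Fin C → ℕ) (hn : ∀ c, 0 < n c) (β₁ β₂ : Cocolor n) :
    Xv n β₁.1.1 β₁.1.2 ⬝ᵥ xv n hn β₂.1.1 β₂.1.2 = if β₁ = β₂ then (1:ℝ) else 0 := by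
  obtain ⟨⟨l, i⟩, hi⟩ := β₁
  obtain ⟨⟨k, j⟩, hj⟩ := β₂
  simp only [Xv, xv, if_neg hi, if_neg hj]
  rw [single_dotProduct]
  simp only [Pi.sub_apply, Pi.single_apply, one_mul, Subtype.ext_iff]
  have h0 : ¬ (⟨l, i⟩ : Idx n) = ⟨k, ⟨0, hn k⟩⟩ := by
    intro hc
    apply hi
    rw [hc]
  rw [if_neg h0, sub_zero]

theorem dotB {C : ℕ} (n : Fin C → ℕ) (hn : ∀ c, 0 < n c) (c₁ c₂ : Fin C) :
    Xv n c₂ ⟨0, hn c₂⟩ ⬝ᵥ xv n hn c₁ ⟨0, hn c₁⟩ = if c₁ = c₂ then (1:ℝ) else 0 := by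
  have h2 : Xv n c₂ ⟨0, hn c₂⟩ = ∑ q : Fin (n c₂), Pi.single (⟨c₂, q⟩ : Idx n) 1 := if_pos rfl
  have h1 : xv n hn c₁ ⟨0, hn c₁⟩ = Pi.single (⟨c₁, ⟨0, hn c₁⟩⟩ : Idx n) 1 := if_pos rfl
  rw [h2, h1, dotProduct_single, mul_one, Finset.sum_apply]
  by_cases h : c₁ = c₂
  · subst h
    rw [if_pos rfl, Finset.sum_eq_single (⟨0, hn c₁⟩ : Fin (n c₁))]
    · simp
    · intro b _ hb
      rw [Pi.single_apply, if_neg]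
      intro hc
      obtain ⟨-, h2⟩ := Sigma.mk.inj_iff.mp hc
      exact hb (eq_of_heq h2).symm
    · simp
  · rw [if_neg h]
    apply Finset.sum_eq_zero
    intro q _
    rw [Pi.single_apply, if_neg]
    intro hc
    exact h (congrArg Sigma.fst hc)

/-- `[𝔬^{c₁}_{β₁}, 𝔞^{β₂}_{c₂}] = δ_{β₁ β₂} 𝔠^{c₁}_{c₂} - δ_{c₁ c₂} 𝔟^{β₂}_{β₁}`. -/
theorem stmt15 {C : ℕ} (hC : 0 < C) (n : Fin C → ℕ) (hn : ∀ c, 0 < n c)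
    (c₁ c₂ : Fin C) (β₁ β₂ : Cocolor n) :
    oM n hn c₁ β₁ * aM n hn β₂ c₂ - aM n hn β₂ c₂ * oM n hn c₁ β₁
      = (if β₁ = β₂ then (1 : ℝ) else 0) • cM n hn c₁ c₂
        - (if c₁ = c₂ then (1 : ℝ) else 0) • bM n hn β₂ β₁ := by
  rw [oM, aM, myVecMulVec_mul, myVecMulVec_mul, dotA n hn β₁ β₂, dotB n hn c₁ c₂]
  rfl
end
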